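/- arXiv:2208.12425 — 5 statements merged into one kernel-verified Lean document; each statement's English description precedes it below -/
import Mathlib

section
/- Let a, b, c₁, c₂ be real numbers and let γ = γ(a,b,c₁,c₂) be the standard-form two-mode covariance matrix. Assume γ is physical, i.e. the complex Hermitian 4×4 matrix γ + (i/2)σ₄ is positive semidefinite. Then there exist real numbers x > 0 and y > 0 such that γ − D(x,y) is positive semidefinite if and only if (ab − c₁²)(ab − c₂²) − |c₁c₂|/2 − (a² + b²)/4 + 1/16 ≥ 0. -/
open Matrix Complex
open scoped ComplexOrder

/-- The standard-form two-mode covariance matrix `γ(a,b,c₁,c₂)`. -/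
def stdCM (a b c₁ c₂ : ℝ) : Matrix (Fin 4) (Fin 4) ℝ :=
  !![a, 0, c₁, 0;
     0, a, 0, -c₂;
     c₁, 0, b, 0;
     0, -c₂, 0, b]

/-- The two-mode symplectic form `σ₄`. -/
def sympl4 : Matrix (Fin 4) (Fin 4) ℝ :=
  !![0, 1, 0, 0;
     -1, 0, 0, 0;
     0, 0, 0, 1;
     0, 0, -1, 0]

/-- The covariance matrix `(1/2)·diag(x, 1/x, y, 1/y)` of a product of two
squeezed vacuum states. -/
noncomputable def sqCM (x y : ℝ) : Matrix (Fin 4) (Fin 4) ℝ :=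
  !![x / 2, 0, 0, 0;
     0, 1 / (2 * x), 0, 0;
     0, 0, y / 2, 0;
     0, 0, 0, 1 / (2 * y)]

set_option maxHeartbeats 1000000

lemma quad_nonneg (p q r t s : ℝ) (hp : 0 ≤ p) (hr : 0 ≤ r) (h : q^2 ≤ p*r) :
    0 ≤ p*t^2 + 2*q*t*s + r*s^2 := by
  rcases eq_or_lt_of_le hp with hp0 | hp0
  · have hq : q = 0 := by nlinarith [sq_nonneg q]
    rw [← hp0, hq]; nlinarith [sq_nonneg s]
  · nlinarith [sq_nonneg (p*t + q*s), mul_nonneg hp hr, sq_nonneg s]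

lemma quad_extract (p q r : ℝ) (h : ∀ t s : ℝ, 0 ≤ p*t^2 + 2*q*t*s + r*s^2) :
    0 ≤ p ∧ 0 ≤ r ∧ q^2 ≤ p*r := by
  have hp : 0 ≤ p := by have := h 1 0; linarith
  have hr : 0 ≤ r := by have := h 0 1; linarith
  refine ⟨hp, hr, ?_⟩
  by_contra hc
  push_neg at hc
  have h1 := h (-q) p
  have hple : p ≤ 0 := by nlinarith
  have hp0 : p = 0 := le_antisymm hple hp
  have h2 := h r (-q)
  have hrle : r ≤ 0 := by nlinarith
  have hr0 : r = 0 := le_antisymm hrle hr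
  have h3 := h (-q) 1
  rw [hp0, hr0] at hc h3
  nlinarith [sq_nonneg q]

lemma bullet4 (b A k1 : ℝ) (hApos : 0 < A) (hbAk0 : 0 < b*A - k1^2)
    (hLA : b*k1^2 ≤ (b^2-1/4)*A) : 1/(4*((b*A - k1^2)/A)) ≤ b := by
  have hv0 : (0:ℝ) < (b*A - k1^2)/A := div_pos hbAk0 hApos
  rw [div_le_iff₀ (by linarith : (0:ℝ) < 4*((b*A - k1^2)/A))]
  rw [show b*(4*((b*A - k1^2)/A)) = (b*(4*(b*A - k1^2)))/A by ring, le_div_iff₀ hApos]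
  nlinarith [hLA]

lemma bullet5 (a b k1 k2 A α β γ : ℝ) (hApos : 0 < A) (haA0 : 0 < a - A)
    (hbAk0 : 0 < b*A - k1^2)
    (hαdef : α = a*(b^2-1/4) - b*k2^2)
    (hβdef : β = (a^2-1/4)*(b^2-1/4) + a*b*k1^2 - a*b*k2^2 - k1^2*k2^2)
    (hγdef : γ = k1^2*(a*k2^2 - (a^2-1/4)*b))
    (hT : 0 ≤ α*A^2 + γ) (hβA : β*A = 2*α*A^2) :
    k2^2 ≤ (a - 1/(4*(a - A)))*(b - 1/(4*((b*A - k1^2)/A))) := by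
  have e1 : a - 1/(4*(a - A)) = ((a^2-1/4) - a*A)/(a - A) := by
    rw [eq_div_iff (ne_of_gt haA0)]
    field_simp
    ring
  have e2 : b - 1/(4*((b*A - k1^2)/A)) = ((b^2-1/4)*A - b*k1^2)/(b*A - k1^2) := by
    rw [eq_div_iff (ne_of_gt hbAk0)]
    field_simp
    ring
  rw [e1, e2, div_mul_div_comm, le_div_iff₀ (mul_pos haA0 hbAk0)]
  have hexp : ((a^2-1/4) - a*A)*((b^2-1/4)*A - b*k1^2) - k2^2*((a - A)*(b*A - k1^2))
      = (α*A^2 + γ) + (β*A - 2*α*A^2) := by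
    rw [hαdef, hβdef, hγdef]; ring
  linarith [hT, hβA, hexp]

lemma key_scalar (a b k1 k2 : ℝ) (ha : 1/2 ≤ a) (hb : 1/2 ≤ b)
    (hk2 : 0 ≤ k2) (hk12 : k2 ≤ k1) (hab1 : k1^2 ≤ a*b)
    (hF : 0 ≤ (a*b - k1^2)*(a*b - k2^2) - k1*k2/2 - (a^2+b^2)/4 + 1/16) :
    ∃ u v : ℝ, 0 < u ∧ 0 < v ∧ u ≤ a ∧ v ≤ b ∧ k1^2 ≤ (a-u)*(b-v) ∧
      1/(4*u) ≤ a ∧ 1/(4*v) ≤ b ∧ k2^2 ≤ (a - 1/(4*u))*(b - 1/(4*v)) := by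
  have ha0 : (0:ℝ) < a := by linarith
  have hb0 : (0:ℝ) < b := by linarith
  have hab0 : (0:ℝ) < a*b := by positivity
  have hk10 : 0 ≤ k1 := le_trans hk2 hk12
  have habk : (a^2+b^2)/4 - 1/16 ≤ (a*b - k1^2)*(a*b) := by
    nlinarith [mul_nonneg hk10 hk2, mul_le_mul_of_nonneg_left (sq_nonneg k2) (sub_nonneg.2 hab1)]
  have hpos : 0 < a*b - k1^2 := by nlinarith
  rcases eq_or_lt_of_le hk2 with hk20 | hk20
  · -- k2 = 0 case : u = 1/(4a), v = 1/(4b)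
    refine ⟨1/(4*a), 1/(4*b), by positivity, by positivity, ?_, ?_, ?_, ?_, ?_, ?_⟩
    · rw [div_le_iff₀ (by positivity)]; nlinarith
    · rw [div_le_iff₀ (by positivity)]; nlinarith
    · have e1 : a - 1/(4*a) = (a^2 - 1/4)/a := by field_simp
      have e2 : b - 1/(4*b) = (b^2 - 1/4)/b := by field_simp
      rw [e1, e2, div_mul_div_comm, le_div_iff₀ hab0]
      nlinarith [habk]
    · have : (1:ℝ)/(4*(1/(4*a))) = a := by field_simp
      rw [this]
    · have : (1:ℝ)/(4*(1/(4*b))) = b := by field_simp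
      rw [this]
    · have e1 : (1:ℝ)/(4*(1/(4*a))) = a := by field_simp
      have e2 : (1:ℝ)/(4*(1/(4*b))) = b := by field_simp
      rw [e1, e2, ← hk20]
      simp
  · -- main case k2 > 0
    have hk1p : 0 < k1 := lt_of_lt_of_le hk20 hk12
    -- minor fact M1 : a*b*(a*(b^2-1/4) - b*k1^2) ≥ b*(b^2-1/4)/4
    have hM1ab : b*(b^2-1/4)/4 ≤ a*b*(a*(b^2-1/4) - b*k1^2) := by
      nlinarith [mul_le_mul_of_nonneg_left habk hb0.le]
    have hM2ab : a*(a^2-1/4)/4 ≤ a*b*((a^2-1/4)*b - a*k1^2) := by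
      nlinarith [mul_le_mul_of_nonneg_left habk ha0.le]
    have hq0 : (0:ℝ) ≤ b^2 - 1/4 := by nlinarith
    have hp0 : (0:ℝ) ≤ a^2 - 1/4 := by nlinarith
    have hM1 : 0 ≤ a*(b^2-1/4) - b*k1^2 := by
      have h2 : 0 ≤ a*b*(a*(b^2-1/4) - b*k1^2) := le_trans (by positivity) hM1ab
      exact (mul_nonneg_iff_of_pos_left hab0).mp h2
    have hM2 : 0 ≤ (a^2-1/4)*b - a*k1^2 := by
      have h2 : 0 ≤ a*b*((a^2-1/4)*b - a*k1^2) := le_trans (by positivity) hM2ab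
      exact (mul_nonneg_iff_of_pos_left hab0).mp h2
    have hqpos : (0:ℝ) < b^2 - 1/4 := by
      rcases eq_or_lt_of_le hq0 with h0 | h0
      · exfalso; nlinarith [hM1]
      · exact h0
    have hppos : (0:ℝ) < a^2 - 1/4 := by
      rcases eq_or_lt_of_le hp0 with h0 | h0
      · exfalso; nlinarith [hM2]
      · exact h0
    have hαpos : 0 < a*(b^2-1/4) - b*k2^2 := by
      have h2 : 0 < a*b*(a*(b^2-1/4) - b*k2^2) := by
        have : a*b*(a*(b^2-1/4) - b*k2^2) = a*b*(a*(b^2-1/4) - b*k1^2) + a*b*b*(k1^2 - k2^2) := by ring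
        rw [this]
        have h3 : 0 ≤ a*b*b*(k1^2-k2^2) := by
          have : k2^2 ≤ k1^2 := by nlinarith
          have h4 : 0 ≤ k1^2 - k2^2 := by linarith
          positivity
        nlinarith [hM1ab]
      exact (mul_pos_iff_of_pos_left hab0).mp h2
    -- opaque abbreviations
    obtain ⟨F, hFdef⟩ : ∃ F:ℝ, F = (a*b - k1^2)*(a*b - k2^2) - k1*k2/2 - (a^2+b^2)/4 + 1/16 := ⟨_, rfl⟩
    obtain ⟨α, hαdef⟩ : ∃ α:ℝ, α = a*(b^2-1/4) - b*k2^2 := ⟨_, rfl⟩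
    obtain ⟨β, hβdef⟩ : ∃ β:ℝ, β = (a^2-1/4)*(b^2-1/4) + a*b*k1^2 - a*b*k2^2 - k1^2*k2^2 := ⟨_, rfl⟩
    obtain ⟨γ, hγdef⟩ : ∃ γ:ℝ, γ = k1^2*(a*k2^2 - (a^2-1/4)*b) := ⟨_, rfl⟩
    rw [← hFdef] at hF
    rw [← hαdef] at hαpos
    obtain ⟨A, hAdef⟩ : ∃ A:ℝ, A = β/(2*α) := ⟨_, rfl⟩
    have h2α : (0:ℝ) < 2*α := by linarith
    have hA1 : 2*α*A = β := by
      rw [hAdef]; field_simp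
    -- lower bound : b*k1^2 ≤ (b^2-1/4)*A
    have hLA : b*k1^2 ≤ (b^2-1/4)*A := by
      have hcert : (2*α)*(b*k1^2) + ((b^2-1/4)*F + (b^2-1/4)*(k1*k2)/2 + k1^2*k2^2/2) = (b^2-1/4)*β := by
        rw [hαdef, hβdef, hFdef]; ring
      have hnn : 0 ≤ (b^2-1/4)*F + (b^2-1/4)*(k1*k2)/2 + k1^2*k2^2/2 := by
        have h6 := mul_nonneg hq0 hF
        have h7 : 0 ≤ (b^2-1/4)*(k1*k2) := mul_nonneg hq0 (mul_nonneg hk10 hk2)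
        positivity
      have h8 : (2*α)*(b*k1^2) ≤ (2*α)*((b^2-1/4)*A) := by
        have e : (2*α)*((b^2-1/4)*A) = (b^2-1/4)*(2*α*A) := by ring
        rw [e, hA1]; linarith
      exact le_of_mul_le_mul_left h8 h2α
    -- upper bound : a*A ≤ a^2-1/4
    have hRA : a*A ≤ a^2-1/4 := by
      have hcert : a*β + (a*F + a*(k1*k2)/2 + b*k2^2/2) = (2*α)*(a^2-1/4) := by
        rw [hαdef, hβdef, hFdef]; ring
      have hnn : 0 ≤ a*F + a*(k1*k2)/2 + b*k2^2/2 := by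
        have h6 := mul_nonneg ha0.le hF
        have h7 : 0 ≤ a*(k1*k2) := mul_nonneg ha0.le (mul_nonneg hk10 hk2)
        positivity
      have h8 : (2*α)*(a*A) ≤ (2*α)*(a^2-1/4) := by
        have e : (2*α)*(a*A) = a*(2*α*A) := by ring
        rw [e, hA1]; linarith
      exact le_of_mul_le_mul_left h8 h2α
    have hApos : 0 < A := by
      have h9 : 0 < (b^2-1/4)*A := lt_of_lt_of_le (by positivity) hLA
      rcases mul_pos_iff.mp h9 with ⟨_, h⟩ | ⟨h, _⟩
      · exact h
      · linarith
    have hAlta : A < a := by nlinarith [hRA]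
    have hbAk : k1^2 < b*A := by nlinarith [mul_le_mul_of_nonneg_left hLA hb0.le]
    -- T(A) ≥ 0
    have hE : 0 ≤ F + k1*k2 := by
      have := mul_nonneg hk10 hk2; linarith
    have hFE : F*(F + k1*k2) = β^2 + 4*α*γ := by
      rw [hFdef, hαdef, hβdef, hγdef]; ring
    have hβA : β*A = 2*α*A^2 := by rw [← hA1]; ring
    have hsq : β^2 = 4*α^2*A^2 := by rw [← hA1]; ring
    have hT : 0 ≤ α*A^2 + γ := by
      have hFE0 : 0 ≤ β^2 + 4*α*γ := by rw [← hFE]; exact mul_nonneg hF hE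
      have heq : (4*α)*(α*A^2 + γ) = β^2 + 4*α*γ := by rw [hsq]; ring
      have h10 : 0 ≤ (4*α)*(α*A^2 + γ) := by rw [heq]; exact hFE0
      exact (mul_nonneg_iff_of_pos_left (by linarith : (0:ℝ) < 4*α)).mp h10
    -- construct u, v
    have hA0' : A ≠ 0 := ne_of_gt hApos
    have hbAk0 : (0:ℝ) < b*A - k1^2 := by linarith
    have haA0 : (0:ℝ) < a - A := by linarith
    have haA0' : a - A ≠ 0 := ne_of_gt haA0
    refine ⟨a - A, (b*A - k1^2)/A, by linarith, div_pos hbAk0 hApos, by linarith, ?_, ?_, ?_, ?_, ?_⟩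
    · rw [div_le_iff₀ hApos]; nlinarith
    · have e0 : a - (a - A) = A := by ring
      have e : b - (b*A - k1^2)/A = k1^2/A := by field_simp; ring
      have e3 : A*(k1^2/A) = k1^2 := by field_simp
      rw [e0, e, e3]
    · rw [div_le_iff₀ (by linarith : (0:ℝ) < 4*(a - A))]; nlinarith [hRA]
    · exact bullet4 b A k1 hApos hbAk0 hLA
    · exact bullet5 a b k1 k2 A α β γ hApos haA0 hbAk0 hαdef hβdef hγdef hT hβA

lemma sub_psd_of_scalars (a b c1 c2 u v : ℝ) (hu : 0 < u) (hv : 0 < v)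
    (h1 : u ≤ a) (h2 : v ≤ b) (h3 : c1^2 ≤ (a-u)*(b-v))
    (h4 : 1/(4*u) ≤ a) (h5 : 1/(4*v) ≤ b)
    (h6 : c2^2 ≤ (a - 1/(4*u))*(b - 1/(4*v))) :
    (stdCM a b c1 c2 - sqCM (2*u) (2*v)).PosSemidef := by
  refine Matrix.PosSemidef.of_dotProduct_mulVec_nonneg ?_ ?_
  · ext i j
    fin_cases i <;> fin_cases j <;>
      simp [stdCM, sqCM, Matrix.conjTranspose_apply, Matrix.vecHead, Matrix.vecTail]
  · intro z
    have he : star z ⬝ᵥ ((stdCM a b c1 c2 - sqCM (2*u) (2*v)) *ᵥ z) =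
        (a - u)*(z 0)^2 + 2*c1*(z 0)*(z 2) + (b - v)*(z 2)^2
        + ((a - 1/(4*u))*(z 1)^2 + 2*(-c2)*(z 1)*(z 3) + (b - 1/(4*v))*(z 3)^2) := by
      simp [stdCM, sqCM, Matrix.mulVec, dotProduct, Fin.sum_univ_four,
        Matrix.vecHead, Matrix.vecTail, star_trivial]
      field_simp
      ring
    rw [he]
    have g1 := quad_nonneg (a-u) c1 (b-v) (z 0) (z 2) (by linarith) (by linarith) (by linarith)
    have g2 := quad_nonneg (a - 1/(4*u)) (-c2) (b - 1/(4*v)) (z 1) (z 3)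
      (by linarith) (by linarith) (by nlinarith)
    linarith [g1, g2]

lemma psd_add {M N : Matrix (Fin 4) (Fin 4) ℂ} (hM : M.PosSemidef) (hN : N.PosSemidef) :
    (M + N).PosSemidef := by
  refine Matrix.PosSemidef.of_dotProduct_mulVec_nonneg (hM.1.add hN.1) fun x => ?_
  rw [Matrix.add_mulVec, dotProduct_add]
  exact add_nonneg (hM.dotProduct_mulVec_nonneg x) (hN.dotProduct_mulVec_nonneg x)

lemma psd_map {M : Matrix (Fin 4) (Fin 4) ℝ} (h : M.PosSemidef) :
    (M.map Complex.ofReal).PosSemidef := by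
  obtain ⟨B, rfl⟩ : ∃ B : Matrix (Fin 4) (Fin 4) ℝ, M = Bᴴ * B := by
    open scoped MatrixOrder in
    obtain ⟨B, hB⟩ := CStarAlgebra.nonneg_iff_eq_star_mul_self.mp h.nonneg
    exact ⟨B, hB⟩
  have e : (Bᴴ*B).map (Complex.ofReal) =
      (B.map Complex.ofReal)ᴴ * (B.map Complex.ofReal) := by
    ext i j
    simp [Matrix.mul_apply, Matrix.conjTranspose_apply, Matrix.map_apply]
  rw [e]
  exact Matrix.posSemidef_conjTranspose_mul_self _

lemma mode_nonneg (x r0 i0 r1 i1 : ℝ) (hx : 0 < x) :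
    0 ≤ x/2*(r0^2+i0^2) + 1/(2*x)*(r1^2+i1^2) - (r0*i1 - i0*r1) := by
  have h1 : 0 ≤ (x*r0 - i1)^2/(2*x) := by positivity
  have h2 : 0 ≤ (x*i0 + r1)^2/(2*x) := by positivity
  have e : (x*r0 - i1)^2/(2*x) + (x*i0 + r1)^2/(2*x)
      = x/2*(r0^2+i0^2) + 1/(2*x)*(r1^2+i1^2) - (r0*i1 - i0*r1) := by
    field_simp
    ring
  linarith [h1, h2, e.symm.le, e.le]

lemma sqCM_phys (x y : ℝ) (hx : 0 < x) (hy : 0 < y) :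
    ((sqCM x y).map (Complex.ofReal) + (Complex.I / 2) • (sympl4.map Complex.ofReal)).PosSemidef := by
  refine Matrix.PosSemidef.of_dotProduct_mulVec_nonneg ?_ ?_
  · ext i j
    fin_cases i <;> fin_cases j <;>
      simp [sqCM, sympl4, Matrix.conjTranspose_apply, Matrix.vecHead, Matrix.vecTail] <;> ring
  · intro z
    rw [Complex.nonneg_iff]
    constructor
    · have e : (star z ⬝ᵥ (((sqCM x y).map (Complex.ofReal) +
          (Complex.I / 2) • (sympl4.map Complex.ofReal)) *ᵥ z)).re
          = (x/2*((z 0).re^2+(z 0).im^2) + 1/(2*x)*((z 1).re^2+(z 1).im^2)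
              - ((z 0).re*(z 1).im - (z 0).im*(z 1).re))
            + (y/2*((z 2).re^2+(z 2).im^2) + 1/(2*y)*((z 3).re^2+(z 3).im^2)
              - ((z 2).re*(z 3).im - (z 2).im*(z 3).re)) := by
        simp [sqCM, sympl4, Matrix.mulVec, dotProduct, Fin.sum_univ_four,
          Matrix.vecHead, Matrix.vecTail, Complex.add_re, Complex.mul_re, Complex.mul_im]
        ring
      rw [e]
      have g1 := mode_nonneg x (z 0).re (z 0).im (z 1).re (z 1).im hx
      have g2 := mode_nonneg y (z 2).re (z 2).im (z 3).re (z 3).im hy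
      linarith
    · have e : (star z ⬝ᵥ (((sqCM x y).map (Complex.ofReal) +
          (Complex.I / 2) • (sympl4.map Complex.ofReal)) *ᵥ z)).im = 0 := by
        simp [sqCM, sympl4, Matrix.mulVec, dotProduct, Fin.sum_univ_four,
          Matrix.vecHead, Matrix.vecTail, Complex.add_im, Complex.mul_re, Complex.mul_im]
        ring
      rw [e]

lemma psd_det_nonneg {M : Matrix (Fin 4) (Fin 4) ℂ} (h : M.PosSemidef) : 0 ≤ M.det := by
  rw [h.isHermitian.det_eq_prod_eigenvalues]
  have h1 : ∀ i, 0 ≤ (h.isHermitian.eigenvalues i) := h.eigenvalues_nonneg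
  have h2 : (∏ i, ((h.isHermitian.eigenvalues i : ℝ) : ℂ)) =
      (((∏ i, h.isHermitian.eigenvalues i : ℝ)) : ℂ) := by push_cast; rfl
  have h3 : (0:ℝ) ≤ ∏ i, h.isHermitian.eigenvalues i := Finset.prod_nonneg fun i _ => h1 i
  exact le_of_le_of_eq (by simpa using Complex.real_le_real.mpr h3) h2.symm

noncomputable def Lam : Matrix (Fin 4) (Fin 4) ℂ :=
  !![1,0,0,0; 0,1,0,0; 0,0,1,0; 0,0,0,-1]

lemma tilde_eq (a b c₁ c₂ x y : ℝ) :
    Lam * ((stdCM a b c₁ c₂ - sqCM x y).map Complex.ofReal) * Lamᴴ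
      + ((sqCM x y).map Complex.ofReal + (Complex.I / 2) • (sympl4.map Complex.ofReal))
    = (stdCM a b c₁ (-c₂)).map Complex.ofReal
      + (Complex.I / 2) • (sympl4.map Complex.ofReal) := by
  ext i j
  fin_cases i <;> fin_cases j <;>
    simp [Lam, stdCM, sqCM, sympl4, Matrix.mul_apply, Matrix.vecMul, dotProduct,
      Matrix.map_apply, Matrix.conjTranspose_apply, Fin.sum_univ_four,
      Matrix.vecHead, Matrix.vecTail] <;> ring

lemma hphys_eq (a b c₁ c₂ : ℝ) :
    (stdCM a b c₁ c₂).map (Complex.ofReal) + (Complex.I / 2) • (sympl4.map Complex.ofReal) =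
    !![(a:ℂ), I/2, c₁, 0; -I/2, a, 0, -c₂; c₁, 0, b, I/2; 0, -c₂, -I/2, b] := by
  ext i j
  fin_cases i <;> fin_cases j <;>
    simp [stdCM, sympl4, Matrix.vecHead, Matrix.vecTail] <;> ring

lemma det_lit (a b c₁ c₂ : ℝ) :
    (!![(a:ℂ), I/2, c₁, 0; -I/2, a, 0, -c₂; c₁, 0, b, I/2; 0, -c₂, -I/2, b]).det =
    (((a*b - c₁^2)*(a*b - c₂^2) + 1/16 - (a^2+b^2)/4 + c₁*c₂/2 : ℝ)) := by
  simp [Matrix.det_succ_row_zero, Fin.sum_univ_succ, Fin.succAbove,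
    Matrix.vecHead, Matrix.vecTail]
  push_cast
  ring_nf
  simp [Complex.I_sq]
  ring

lemma forward (a b c₁ c₂ x y : ℝ) (hx : 0 < x) (hy : 0 < y)
    (hphys : ((stdCM a b c₁ c₂).map (Complex.ofReal) +
        (Complex.I / 2) • (sympl4.map Complex.ofReal)).PosSemidef)
    (hsep : (stdCM a b c₁ c₂ - sqCM x y).PosSemidef) :
    0 ≤ (a * b - c₁ ^ 2) * (a * b - c₂ ^ 2) - |c₁ * c₂| / 2
        - (a ^ 2 + b ^ 2) / 4 + 1 / 16 := by
  -- E+ from hphys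
  have hplus : (0:ℝ) ≤ (a*b - c₁^2)*(a*b - c₂^2) + 1/16 - (a^2+b^2)/4 + c₁*c₂/2 := by
    have hM := hphys
    rw [hphys_eq] at hM
    have h1 := psd_det_nonneg hM
    rw [det_lit] at h1
    exact Complex.zero_le_real.mp h1
  -- E- from the partial transpose
  have htilde : ((stdCM a b c₁ (-c₂)).map (Complex.ofReal) +
      (Complex.I / 2) • (sympl4.map Complex.ofReal)).PosSemidef := by
    rw [← tilde_eq a b c₁ c₂ x y]
    exact psd_add ((psd_map hsep).mul_mul_conjTranspose_same Lam) (sqCM_phys x y hx hy)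
  have hminus : (0:ℝ) ≤ (a*b - c₁^2)*(a*b - c₂^2) + 1/16 - (a^2+b^2)/4 - c₁*c₂/2 := by
    have hM := htilde
    rw [hphys_eq] at hM
    have h1 := psd_det_nonneg hM
    rw [det_lit] at h1
    have h2 := Complex.zero_le_real.mp h1
    nlinarith [h2]
  rcases le_or_gt 0 (c₁*c₂) with hsgn | hsgn
  · rw [_root_.abs_of_nonneg hsgn]; linarith
  · rw [_root_.abs_of_neg hsgn]; linarith


lemma phys_scalars (a b c₁ c₂ : ℝ)
    (h : ((stdCM a b c₁ c₂).map (Complex.ofReal) +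
        (Complex.I / 2) • (sympl4.map Complex.ofReal)).PosSemidef) :
    1/2 ≤ a ∧ 1/2 ≤ b ∧ c₁^2 ≤ a*b ∧ c₂^2 ≤ a*b := by
  rw [hphys_eq] at h
  refine ⟨?_, ?_, ?_, ?_⟩
  · have h1 := h.dotProduct_mulVec_nonneg ![1, I, 0, 0]
    have e : star ![(1:ℂ), I, 0, 0] ⬝ᵥ
        ((!![(a:ℂ), I/2, c₁, 0; -I/2, a, 0, -c₂; c₁, 0, b, I/2; 0, -c₂, -I/2, b]) *ᵥ ![1, I, 0, 0])
        = ((2*a - 1 : ℝ) : ℂ) := by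
      simp [Matrix.mulVec, dotProduct, Fin.sum_univ_four, Matrix.vecHead, Matrix.vecTail]
      ring_nf
      simp [Complex.I_sq]
      ring
    rw [e] at h1
    have h2 : (0:ℝ) ≤ 2*a - 1 := Complex.zero_le_real.mp h1
    linarith
  · have h1 := h.dotProduct_mulVec_nonneg ![0, 0, 1, I]
    have e : star ![(0:ℂ), 0, 1, I] ⬝ᵥ
        ((!![(a:ℂ), I/2, c₁, 0; -I/2, a, 0, -c₂; c₁, 0, b, I/2; 0, -c₂, -I/2, b]) *ᵥ ![0, 0, 1, I])
        = ((2*b - 1 : ℝ) : ℂ) := by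
      simp [Matrix.mulVec, dotProduct, Fin.sum_univ_four, Matrix.vecHead, Matrix.vecTail]
      ring_nf
      simp [Complex.I_sq]
      ring
    rw [e] at h1
    have h2 : (0:ℝ) ≤ 2*b - 1 := Complex.zero_le_real.mp h1
    linarith
  · have hq : ∀ t s : ℝ, 0 ≤ a*t^2 + 2*c₁*t*s + b*s^2 := by
      intro t s
      have h1 := h.dotProduct_mulVec_nonneg ![(t:ℂ), 0, s, 0]
      have e : star ![(t:ℂ), 0, s, 0] ⬝ᵥ
          ((!![(a:ℂ), I/2, c₁, 0; -I/2, a, 0, -c₂; c₁, 0, b, I/2; 0, -c₂, -I/2, b]) *ᵥ ![(t:ℂ), 0, s, 0])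
          = ((a*t^2 + 2*c₁*t*s + b*s^2 : ℝ) : ℂ) := by
        simp [Matrix.mulVec, dotProduct, Fin.sum_univ_four, Matrix.vecHead, Matrix.vecTail]
        push_cast
        ring
      rw [e] at h1
      exact Complex.zero_le_real.mp h1
    exact (quad_extract a c₁ b hq).2.2
  · have hq : ∀ t s : ℝ, 0 ≤ a*t^2 + 2*(-c₂)*t*s + b*s^2 := by
      intro t s
      have h1 := h.dotProduct_mulVec_nonneg ![0, (t:ℂ), 0, s]
      have e : star ![(0:ℂ), (t:ℂ), 0, s] ⬝ᵥ
          ((!![(a:ℂ), I/2, c₁, 0; -I/2, a, 0, -c₂; c₁, 0, b, I/2; 0, -c₂, -I/2, b]) *ᵥ ![0, (t:ℂ), 0, s])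
          = ((a*t^2 + 2*(-c₂)*t*s + b*s^2 : ℝ) : ℂ) := by
        simp [Matrix.mulVec, dotProduct, Fin.sum_univ_four, Matrix.vecHead, Matrix.vecTail]
        push_cast
        ring
      rw [e] at h1
      exact Complex.zero_le_real.mp h1
    have := (quad_extract a (-c₂) b hq).2.2
    nlinarith [this]

theorem stdCM_separable_iff_simon
    (a b c₁ c₂ : ℝ)
    (hphys : ((stdCM a b c₁ c₂).map (Complex.ofReal) +
        (Complex.I / 2) • (sympl4.map Complex.ofReal)).PosSemidef) :
    (∃ x y : ℝ, 0 < x ∧ 0 < y ∧ (stdCM a b c₁ c₂ - sqCM x y).PosSemidef) ↔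
      (a * b - c₁ ^ 2) * (a * b - c₂ ^ 2) - |c₁ * c₂| / 2
        - (a ^ 2 + b ^ 2) / 4 + 1 / 16 ≥ 0 := by
  constructor
  · rintro ⟨x, y, hx, hy, hpsd⟩
    exact forward a b c₁ c₂ x y hx hy hphys hpsd
  · intro hF
    rw [ge_iff_le] at hF
    obtain ⟨ha, hb, hc1, hc2⟩ := phys_scalars a b c₁ c₂ hphys
    rcases le_total |c₂| |c₁| with hcc | hcc
    · -- k1 = |c₁|, k2 = |c₂|
      have hF' : 0 ≤ (a*b - |c₁|^2)*(a*b - |c₂|^2) - |c₁| * |c₂|/2 - (a^2+b^2)/4 + 1/16 := by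
        have heq : (a*b - |c₁|^2)*(a*b - |c₂|^2) - |c₁| * |c₂|/2 - (a^2+b^2)/4 + 1/16
            = (a*b - c₁^2)*(a*b - c₂^2) - |c₁*c₂|/2 - (a^2+b^2)/4 + 1/16 := by
          rw [_root_.sq_abs, _root_.sq_abs, ← _root_.abs_mul]
        rw [heq]; exact hF
      obtain ⟨u, v, hu, hv, h1, h2, h3, h4, h5, h6⟩ :=
        key_scalar a b |c₁| |c₂| ha hb (_root_.abs_nonneg c₂) hcc (by rw [_root_.sq_abs]; exact hc1) hF'
      rw [_root_.sq_abs] at h3 h6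
      exact ⟨2*u, 2*v, by linarith, by linarith,
        sub_psd_of_scalars a b c₁ c₂ u v hu hv h1 h2 h3 h4 h5 h6⟩
    · -- k1 = |c₂|, k2 = |c₁| ; then invert
      have hF' : 0 ≤ (a*b - |c₂|^2)*(a*b - |c₁|^2) - |c₂| * |c₁|/2 - (a^2+b^2)/4 + 1/16 := by
        have heq : (a*b - |c₂|^2)*(a*b - |c₁|^2) - |c₂| * |c₁|/2 - (a^2+b^2)/4 + 1/16
            = (a*b - c₁^2)*(a*b - c₂^2) - |c₁*c₂|/2 - (a^2+b^2)/4 + 1/16 := by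
          rw [_root_.sq_abs, _root_.sq_abs, mul_comm |c₂| |c₁|, ← _root_.abs_mul]
          ring
        rw [heq]; exact hF
      obtain ⟨u, v, hu, hv, h1, h2, h3, h4, h5, h6⟩ :=
        key_scalar a b |c₂| |c₁| ha hb (_root_.abs_nonneg c₁) hcc (by rw [_root_.sq_abs]; exact hc2) hF'
      rw [_root_.sq_abs] at h3 h6
      have hu4 : (0:ℝ) < 1/(4*u) := by positivity
      have hv4 : (0:ℝ) < 1/(4*v) := by positivity
      have e1 : 1/(4*(1/(4*u))) = u := by field_simp
      have e2 : 1/(4*(1/(4*v))) = v := by field_simp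
      refine ⟨2*(1/(4*u)), 2*(1/(4*v)), by linarith, by linarith,
        sub_psd_of_scalars a b c₁ c₂ (1/(4*u)) (1/(4*v)) hu4 hv4 h4 h5 h6 ?_ ?_ ?_⟩
      · rw [e1]; linarith
      · rw [e2]; linarith
      · rw [e1, e2]; exact h3
end

section
/- Let a, b, c₁, c₂ be real numbers. Suppose there exist real numbers x > 0 and y > 0 such that a − x/2 ≥ 0, b − y/2 ≥ 0, (a − x/2)(b − y/2) − c₁² ≥ 0, a − 1/(2x) ≥ 0, b − 1/(2y) ≥ 0, and (a − 1/(2x))(b − 1/(2y)) − c₂² ≥ 0. Then (ab − c₁²)(ab − c₂²) − |c₁c₂|/2 − (a² + b²)/4 + 1/16 ≥ 0. -/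
set_option maxHeartbeats 1000000 in
/-- Key polynomial lemma (denominators cleared). -/
lemma simon_key (a b x y d1 d2 : ℝ) (hx : 0 < x) (hy : 0 < y)
    (hd1 : 0 ≤ d1) (hd2 : 0 ≤ d2)
    (hA : 0 ≤ 2*a - x) (hB : 0 ≤ 2*b - y)
    (hD : 0 ≤ 2*a*x - 1) (hE : 0 ≤ 2*b*y - 1)
    (hC : 4*d1^2 ≤ (2*a - x)*(2*b - y))
    (hF : 4*(x*y)*d2^2 ≤ (2*a*x - 1)*(2*b*y - 1)) :
    (a*b - d1^2)*(a*b - d2^2) - d1*d2/2 - (a^2+b^2)/4 + 1/16 ≥ 0 := by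
  have hb : 0 < b := by
    rcases le_or_gt b 0 with hb0 | hb0
    · nlinarith [mul_nonneg (neg_nonneg.mpr hb0) hy.le]
    · exact hb0
  have hG0 : 0 ≤ y*(2*a-x)*(2*b*y-1) + x*(2*a*x-1)*(2*b-y) :=
    add_nonneg (mul_nonneg (mul_nonneg hy.le hA) hE)
      (mul_nonneg (mul_nonneg hx.le hD) hB)
  -- G² ≥ 4xy·M1·M2 via a perfect-square identity
  have hGsq : 4*(x*y)*((2*a - x)*(2*b - y))*((2*a*x - 1)*(2*b*y - 1))
      ≤ (y*(2*a-x)*(2*b*y-1) + x*(2*a*x-1)*(2*b-y))^2 := by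
    have hid2 : (y*(2*a-x)*(2*b*y-1) + x*(2*a*x-1)*(2*b-y))^2
        - 4*(x*y)*((2*a - x)*(2*b - y))*((2*a*x - 1)*(2*b*y - 1))
        = (4*a*b*(x^2-y^2) + 2*a*y*(1-x^2) - 2*b*x*(1-y^2))^2 := by ring
    linarith [sq_nonneg (4*a*b*(x^2-y^2) + 2*a*y*(1-x^2) - 2*b*x*(1-y^2)), hid2]
  -- product of the two constraint inequalities
  have hdd : 16*(x*y)*(d1^2*d2^2) ≤ ((2*a - x)*(2*b - y))*((2*a*x - 1)*(2*b*y - 1)) := by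
    have h1 : (4*d1^2) * (4*(x*y)*d2^2) ≤ ((2*a - x)*(2*b - y))*((2*a*x - 1)*(2*b*y - 1)) :=
      mul_le_mul hC hF (by positivity) (mul_nonneg hA hB)
    linarith [h1]
  have h8 : 8*(x*y)*(d1*d2) ≤ y*(2*a-x)*(2*b*y-1) + x*(2*a*x-1)*(2*b-y) := by
    have hsq : (8*(x*y)*(d1*d2))^2
        ≤ (y*(2*a-x)*(2*b*y-1) + x*(2*a*x-1)*(2*b-y))^2 := by
      calc (8*(x*y)*(d1*d2))^2
          = 4*(x*y) * (16*(x*y)*(d1^2*d2^2)) := by ring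
        _ ≤ 4*(x*y) * (((2*a - x)*(2*b - y))*((2*a*x - 1)*(2*b*y - 1))) :=
            mul_le_mul_of_nonneg_left hdd (by positivity)
        _ = 4*(x*y)*((2*a - x)*(2*b - y))*((2*a*x - 1)*(2*b*y - 1)) := by ring
        _ ≤ _ := hGsq
    have hnn : 0 ≤ 8*(x*y)*(d1*d2) := by positivity
    set G := y*(2*a-x)*(2*b*y-1) + x*(2*a*x-1)*(2*b-y) with hGdef
    set T := 8*(x*y)*(d1*d2) with hTdef
    nlinarith [hsq, hG0, hnn]
  -- lower bounds on the factors
  have p1 : 4*a*b - (2*a - x)*(2*b - y) ≤ 4*(a*b - d1^2) := by linarith [hC]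
  have p1' : 0 ≤ 4*a*b - (2*a - x)*(2*b - y) := by
    linarith [mul_nonneg hy.le hA, mul_pos hb hx]
  have p2 : 4*a*b*(x*y) - (2*a*x - 1)*(2*b*y - 1) ≤ 4*(x*y)*(a*b - d2^2) := by
    linarith [hF]
  have p2' : 0 ≤ 4*a*b*(x*y) - (2*a*x - 1)*(2*b*y - 1) := by linarith [hD, hE]
  have key2 : (4*a*b - (2*a - x)*(2*b - y))*(4*a*b*(x*y) - (2*a*x - 1)*(2*b*y - 1))
      ≤ (4*(a*b - d1^2)) * (4*(x*y)*(a*b - d2^2)) :=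
    mul_le_mul p1 p2 p2' (by linarith)
  -- the determinant identity
  have hid : (4*a*b - (2*a - x)*(2*b - y))*(4*a*b*(x*y) - (2*a*x - 1)*(2*b*y - 1))
      - 16*(x*y)*((a^2+b^2)/4 - 1/16)
      = y*(2*a-x)*(2*b*y-1) + x*(2*a*x-1)*(2*b-y) := by ring
  have hxyF : 0 ≤ 16*(x*y)*((a*b - d1^2)*(a*b - d2^2) - d1*d2/2 - (a^2+b^2)/4 + 1/16) := by
    nlinarith [key2, h8, hid]
  set F := (a*b - d1^2)*(a*b - d2^2) - d1*d2/2 - (a^2+b^2)/4 + 1/16 with hFdef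
  nlinarith [hxyF, mul_pos hx hy]

theorem simon_condition_of_dominates_squeezed
    (a b c₁ c₂ : ℝ)
    (h : ∃ x y : ℝ, 0 < x ∧ 0 < y ∧
      a - x / 2 ≥ 0 ∧ b - y / 2 ≥ 0 ∧
      (a - x / 2) * (b - y / 2) - c₁ ^ 2 ≥ 0 ∧
      a - 1 / (2 * x) ≥ 0 ∧ b - 1 / (2 * y) ≥ 0 ∧
      (a - 1 / (2 * x)) * (b - 1 / (2 * y)) - c₂ ^ 2 ≥ 0) :
    (a * b - c₁ ^ 2) * (a * b - c₂ ^ 2) - |c₁ * c₂| / 2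
      - (a ^ 2 + b ^ 2) / 4 + 1 / 16 ≥ 0 := by
  obtain ⟨x, y, hx, hy, h1, h2, h3, h4, h5, h6⟩ := h
  have hxne : x ≠ 0 := hx.ne'
  have hyne : y ≠ 0 := hy.ne'
  have hs1 : |c₁|^2 = c₁^2 := sq_abs c₁
  have hs2 : |c₂|^2 = c₂^2 := sq_abs c₂
  have habs : |c₁ * c₂| = |c₁| * |c₂| := abs_mul c₁ c₂
  have hA : 0 ≤ 2*a - x := by linarith
  have hB : 0 ≤ 2*b - y := by linarith
  have hD : 0 ≤ 2*a*x - 1 := by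
    have h' : 0 ≤ (a - 1/(2*x)) * (2*x) := mul_nonneg h4 (by positivity)
    have heq : (a - 1/(2*x)) * (2*x) = 2*a*x - 1 := by field_simp
    linarith [heq ▸ h']
  have hE : 0 ≤ 2*b*y - 1 := by
    have h' : 0 ≤ (b - 1/(2*y)) * (2*y) := mul_nonneg h5 (by positivity)
    have heq : (b - 1/(2*y)) * (2*y) = 2*b*y - 1 := by field_simp
    linarith [heq ▸ h']
  have hC : 4*|c₁|^2 ≤ (2*a - x)*(2*b - y) := by
    rw [hs1]; nlinarith [h3]
  have hF : 4*(x*y)*|c₂|^2 ≤ (2*a*x - 1)*(2*b*y - 1) := by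
    rw [hs2]
    have h' : 0 ≤ ((a - 1/(2*x)) * (b - 1/(2*y)) - c₂^2) * (4*(x*y)) :=
      mul_nonneg h6 (by positivity)
    have heq : ((a - 1/(2*x)) * (b - 1/(2*y)) - c₂^2) * (4*(x*y))
        = (2*a*x - 1)*(2*b*y - 1) - 4*(x*y)*c₂^2 := by field_simp; ring
    linarith [heq ▸ h']
  have key := simon_key a b x y |c₁| |c₂| hx hy (abs_nonneg _) (abs_nonneg _)
    hA hB hD hE hC hF
  rw [hs1, hs2] at key
  rw [habs]
  linarith
end

section
/- Let A, B, C, D, E, F be real numbers. Suppose there exist real numbers x > 0 and y > 0 such that A − x/2 ≥ 0, C − y/2 ≥ 0, (A − x/2)(C − y/2) − E² ≥ 0, B − 1/(2x) ≥ 0, D − 1/(2y) ≥ 0, and (B − 1/(2x))(D − 1/(2y)) − F² ≥ 0. Then (AC − E²)(BD − F²) − |EF|/2 − (CD + AB)/4 + 1/16 ≥ 0. -/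
set_option maxHeartbeats 1000000


theorem wernerWolf_condition_of_dominates_squeezed
    (A B C D E F : ℝ)
    (h : ∃ x y : ℝ, 0 < x ∧ 0 < y ∧
      A - x / 2 ≥ 0 ∧ C - y / 2 ≥ 0 ∧
      (A - x / 2) * (C - y / 2) - E ^ 2 ≥ 0 ∧
      B - 1 / (2 * x) ≥ 0 ∧ D - 1 / (2 * y) ≥ 0 ∧
      (B - 1 / (2 * x)) * (D - 1 / (2 * y)) - F ^ 2 ≥ 0) :
    (A * C - E ^ 2) * (B * D - F ^ 2) - |E * F| / 2
      - (C * D + A * B) / 4 + 1 / 16 ≥ 0 := by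
  obtain ⟨x, y, hx, hy, h1, h2, h3, h4, h5, h6⟩ := h
  have h1' : 0 ≤ 2 * A - x := by linarith
  have h2' : 0 ≤ 2 * C - y := by linarith
  have h3' : 0 ≤ (2 * A - x) * (2 * C - y) - 4 * E ^ 2 := by nlinarith [h3]
  have h4' : 0 ≤ 2 * x * B - 1 := by
    have h := (div_le_iff₀ (by positivity : (0:ℝ) < 2 * x)).mp
      (by linarith : 1 / (2 * x) ≤ B)
    nlinarith [h]
  have h5' : 0 ≤ 2 * y * D - 1 := by
    have h := (div_le_iff₀ (by positivity : (0:ℝ) < 2 * y)).mp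
      (by linarith : 1 / (2 * y) ≤ D)
    nlinarith [h]
  have h6' : 0 ≤ (2 * x * B - 1) * (2 * y * D - 1) - 4 * x * y * F ^ 2 := by
    have e : (2 * x * B - 1) * (2 * y * D - 1) - 4 * x * y * F ^ 2
        = (4 * x * y) * ((B - 1 / (2 * x)) * (D - 1 / (2 * y)) - F ^ 2) := by
      field_simp
      ring
    rw [e]
    exact mul_nonneg (by positivity) h6
  set G := |E * F| with hGdef
  have hG : 0 ≤ G := abs_nonneg _
  have hG2 : G ^ 2 = E ^ 2 * F ^ 2 := by
    rw [hGdef, sq_abs]; ring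
  have hprod : 16 * x ^ 2 * y ^ 2 * G ^ 2
      ≤ ((2 * A - x) * y * (2 * y * D - 1)) * ((2 * C - y) * x * (2 * x * B - 1)) := by
    nlinarith [mul_nonneg (mul_nonneg hx.le hy.le) (mul_nonneg h3' h6'),
      mul_nonneg (mul_nonneg (mul_nonneg hx.le hy.le) (sq_nonneg E)) h6',
      mul_nonneg (mul_nonneg (sq_nonneg (x * y)) (sq_nonneg F)) h3', hG2]
  have key : 8 * x * y * G
      ≤ (2 * A - x) * y * (2 * y * D - 1) + (2 * C - y) * x * (2 * x * B - 1) := by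
    nlinarith [hprod,
      sq_nonneg ((2 * A - x) * y * (2 * y * D - 1) - (2 * C - y) * x * (2 * x * B - 1)),
      mul_nonneg (mul_nonneg h1' hy.le) h5',
      mul_nonneg (mul_nonneg h2' hx.le) h4',
      mul_nonneg (mul_nonneg hx.le hy.le) hG, hG, mul_pos hx hy]
  have n1 : 0 ≤ ((2 * A - x) * (2 * C - y) - 4 * E ^ 2)
      * ((2 * x * B - 1) * (2 * y * D - 1) - 4 * x * y * F ^ 2) := mul_nonneg h3' h6'
  have n2 : 0 ≤ ((2 * A - x) * (2 * C - y) - 4 * E ^ 2)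
      * ((2 * x * B - 1) + (2 * y * D - 1) + 1) := mul_nonneg h3' (by linarith)
  have n3 : 0 ≤ ((2 * A - x) * y + (2 * C - y) * x)
      * ((2 * x * B - 1) * (2 * y * D - 1) - 4 * x * y * F ^ 2) :=
    mul_nonneg (add_nonneg (mul_nonneg h1' hy.le) (mul_nonneg h2' hx.le)) h6'
  have n4 : 0 ≤ x * y * ((2 * x * B - 1) * (2 * y * D - 1) - 4 * x * y * F ^ 2) :=
    mul_nonneg (mul_pos hx hy).le h6'
  have hid : 16 * x * y * ((A * C - E ^ 2) * (B * D - F ^ 2) - G / 2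
      - (C * D + A * B) / 4 + 1 / 16)
      = ((2 * A - x) * (2 * C - y) - 4 * E ^ 2)
          * ((2 * x * B - 1) * (2 * y * D - 1) - 4 * x * y * F ^ 2)
        + ((2 * A - x) * (2 * C - y) - 4 * E ^ 2)
          * ((2 * x * B - 1) + (2 * y * D - 1) + 1)
        + ((2 * A - x) * y + (2 * C - y) * x)
          * ((2 * x * B - 1) * (2 * y * D - 1) - 4 * x * y * F ^ 2)
        + x * y * ((2 * x * B - 1) * (2 * y * D - 1) - 4 * x * y * F ^ 2)
        + ((2 * A - x) * y * (2 * y * D - 1) + (2 * C - y) * x * (2 * x * B - 1)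
            - 8 * x * y * G) := by
    ring
  have H : 0 ≤ 16 * x * y * ((A * C - E ^ 2) * (B * D - F ^ 2) - G / 2
      - (C * D + A * B) / 4 + 1 / 16) := by
    rw [hid]; linarith
  nlinarith [H, mul_pos hx hy]
end

section
/- Let T be a real symmetric 2×2 matrix. Then det(S + T) ≥ det(S) for every real symmetric positive definite 2×2 matrix S if and only if T is positive semidefinite. -/
open Matrix

lemma quad2 (M : Matrix (Fin 2) (Fin 2) ℝ) (x : Fin 2 → ℝ) :
    dotProduct (star x) (M *ᵥ x) =
      M 0 0 * (x 0 * x 0) + M 0 1 * (x 0 * x 1) + M 1 0 * (x 0 * x 1)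
        + M 1 1 * (x 1 * x 1) := by
  simp [dotProduct, mulVec, Fin.sum_univ_two]
  ring

lemma symm2 (p q r : ℝ) : (!![p, q; q, r] : Matrix (Fin 2) (Fin 2) ℝ).IsSymm := by
  rw [Matrix.IsSymm]
  ext i j
  fin_cases i <;> fin_cases j <;> simp

lemma herm_of_symm2 {M : Matrix (Fin 2) (Fin 2) ℝ} (h : M.IsSymm) : M.IsHermitian := by
  rwa [Matrix.IsHermitian, conjTranspose_eq_transpose_of_trivial]

lemma posDef2 {p q r : ℝ} (hp : 0 < p) (hd : q * q < p * r) :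
    (!![p, q; q, r] : Matrix (Fin 2) (Fin 2) ℝ).PosDef := by
  refine PosDef.of_dotProduct_mulVec_pos (herm_of_symm2 (symm2 p q r)) fun x hx => ?_
  rw [quad2]
  have e00 : (!![p, q; q, r] : Matrix (Fin 2) (Fin 2) ℝ) 0 0 = p := rfl
  have e01 : (!![p, q; q, r] : Matrix (Fin 2) (Fin 2) ℝ) 0 1 = q := rfl
  have e10 : (!![p, q; q, r] : Matrix (Fin 2) (Fin 2) ℝ) 1 0 = q := rfl
  have e11 : (!![p, q; q, r] : Matrix (Fin 2) (Fin 2) ℝ) 1 1 = r := rfl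
  rw [e00, e01, e10, e11]
  obtain ⟨i, hi⟩ := Function.ne_iff.mp hx
  fin_cases i
  · simp only [Pi.zero_apply] at hi
    have hx0 : x 0 ≠ 0 := hi
    rcases eq_or_ne (x 1) 0 with h1 | h1
    · rw [h1]; nlinarith [mul_self_pos.mpr hx0]
    · nlinarith [sq_nonneg (p * x 0 + q * x 1), mul_self_pos.mpr h1, mul_self_pos.mpr hx0]
  · simp only [Pi.zero_apply] at hi
    have hx1 : x 1 ≠ 0 := hi
    nlinarith [sq_nonneg (p * x 0 + q * x 1), mul_self_pos.mpr hx1]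

theorem det_add_ge_det_iff_posSemidef
    (T : Matrix (Fin 2) (Fin 2) ℝ) (hT : T.IsSymm) :
    (∀ S : Matrix (Fin 2) (Fin 2) ℝ, S.IsSymm → S.PosDef →
        (S + T).det ≥ S.det) ↔ T.PosSemidef := by
  set a := T 0 0 with haa
  set b := T 0 1 with hbb
  set c := T 1 1 with hcc
  have hb' : T 1 0 = b := by rw [← hT]; rfl
  constructor
  · intro H
    have key : ∀ p q r : ℝ, 0 < p → q * q < p * r →
        0 ≤ p * c + r * a + a * c - b * b - 2 * q * b := by
      intro p q r hp hd
      have h := H !![p, q; q, r] (symm2 p q r) (posDef2 hp hd)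
      rw [Matrix.det_fin_two, Matrix.det_fin_two] at h
      simp only [Matrix.add_apply] at h
      rw [← haa, ← hbb, ← hcc, hb'] at h
      have e00 : (!![p, q; q, r] : Matrix (Fin 2) (Fin 2) ℝ) 0 0 = p := rfl
      have e01 : (!![p, q; q, r] : Matrix (Fin 2) (Fin 2) ℝ) 0 1 = q := rfl
      have e10 : (!![p, q; q, r] : Matrix (Fin 2) (Fin 2) ℝ) 1 0 = q := rfl
      have e11 : (!![p, q; q, r] : Matrix (Fin 2) (Fin 2) ℝ) 1 1 = r := rfl
      rw [e00, e01, e10, e11] at h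
      nlinarith [h]
    have hc : 0 ≤ c := by
      by_contra hc
      push_neg at hc
      set t : ℝ := max 1 ((a + a * c - b * b + 1) / (-c)) with ht
      have ht1 : (1:ℝ) ≤ t := le_max_left _ _
      have ht2 : (a + a * c - b * b + 1) / (-c) ≤ t := le_max_right _ _
      have h := key t 0 1 (by linarith) (by simpa using (by linarith : (0:ℝ) < t * 1))
      have htc : t * c ≤ ((a + a * c - b * b + 1) / (-c)) * c :=
        mul_le_mul_of_nonpos_right ht2 (le_of_lt hc)
      have hcne : -c ≠ 0 := by linarith
      have heq : ((a + a * c - b * b + 1) / (-c)) * c = -(a + a * c - b * b + 1) := by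
        rw [div_mul_eq_mul_div, div_neg, mul_div_assoc, div_self (neg_ne_zero.mp hcne)]
        ring
      rw [heq] at htc
      linarith
    have ha : 0 ≤ a := by
      by_contra ha
      push_neg at ha
      set t : ℝ := max 1 ((c + a * c - b * b + 1) / (-a)) with ht
      have ht1 : (1:ℝ) ≤ t := le_max_left _ _
      have ht2 : (c + a * c - b * b + 1) / (-a) ≤ t := le_max_right _ _
      have h := key 1 0 t (by linarith) (by simpa using (by linarith : (0:ℝ) < 1 * t))
      have hta : t * a ≤ ((c + a * c - b * b + 1) / (-a)) * a :=
        mul_le_mul_of_nonpos_right ht2 (le_of_lt ha)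
      have hane : -a ≠ 0 := by linarith
      have heq : ((c + a * c - b * b + 1) / (-a)) * a = -(c + a * c - b * b + 1) := by
        rw [div_mul_eq_mul_div, div_neg, mul_div_assoc, div_self (neg_ne_zero.mp hane)]
        ring
      rw [heq] at hta
      linarith
    have hdet : b * b ≤ a * c := by
      by_contra hd
      push_neg at hd
      rcases le_or_gt (a + c) 0 with hac | hac
      · have h := key 1 0 1 one_pos (by norm_num)
        nlinarith
      · set e : ℝ := (b * b - a * c) / (2 * (a + c)) with he
        have he0 : 0 < e := div_pos (by linarith) (by linarith)
        have h := key e 0 e he0 (by nlinarith)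
        have heq : e * (a + c) = (b * b - a * c) / 2 := by
          rw [he]; field_simp
        nlinarith
    refine PosSemidef.of_dotProduct_mulVec_nonneg (herm_of_symm2 hT) fun x => ?_
    rw [quad2, ← haa, ← hbb, ← hcc, hb']
    rcases eq_or_lt_of_le ha with ha0 | ha0
    · have hb0 : b = 0 := by
        have h1 : b * b ≤ 0 := by nlinarith
        exact mul_self_eq_zero.mp (le_antisymm h1 (mul_self_nonneg b))
      rw [← ha0, hb0]
      nlinarith [mul_self_nonneg (x 1)]
    · nlinarith [sq_nonneg (a * x 0 + b * x 1), mul_nonneg (sub_nonneg.mpr hdet)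
        (mul_self_nonneg (x 1))]
  · intro hPSD S hSsymm hS
    set p := S 0 0 with hpp
    set q := S 0 1 with hqq
    set r := S 1 1 with hrr
    have hq' : S 1 0 = q := by rw [← hSsymm]; rfl
    have hdS : 0 < p * r - q * q := by
      have := hS.det_pos
      rw [Matrix.det_fin_two, hq', ← hpp, ← hqq, ← hrr] at this
      linarith
    have hp : 0 < p := by
      have h := hS.dotProduct_mulVec_pos (x := ![1, 0]) (by intro h; simpa using congrFun h 0)
      rw [quad2] at h
      have e0 : (![1, 0] : Fin 2 → ℝ) 0 = 1 := rfl
      have e1 : (![1, 0] : Fin 2 → ℝ) 1 = 0 := rfl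
      rw [e0, e1, ← hpp] at h
      linarith [h]
    have ha : 0 ≤ a := by
      have h := hPSD.dotProduct_mulVec_nonneg ![1, 0]
      rw [quad2] at h
      have e0 : (![1, 0] : Fin 2 → ℝ) 0 = 1 := rfl
      have e1 : (![1, 0] : Fin 2 → ℝ) 1 = 0 := rfl
      rw [e0, e1, ← haa] at h
      linarith [h]
    have hc : 0 ≤ c := by
      have h := hPSD.dotProduct_mulVec_nonneg ![0, 1]
      rw [quad2] at h
      have e0 : (![0, 1] : Fin 2 → ℝ) 0 = 0 := rfl
      have e1 : (![0, 1] : Fin 2 → ℝ) 1 = 1 := rfl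
      rw [e0, e1, ← hcc] at h
      linarith [h]
    have hQ : ∀ u w : ℝ, 0 ≤ a * (u * u) + 2 * b * (u * w) + c * (w * w) := by
      intro u w
      have h := hPSD.dotProduct_mulVec_nonneg ![u, w]
      rw [quad2, ← haa, ← hbb, ← hcc, hb'] at h
      have e0 : (![u, w] : Fin 2 → ℝ) 0 = u := rfl
      have e1 : (![u, w] : Fin 2 → ℝ) 1 = w := rfl
      rw [e0, e1] at h
      linarith [h]
    have hdT : b * b ≤ a * c := by
      rcases eq_or_lt_of_le ha with ha0 | ha0
      · rcases eq_or_lt_of_le hc with hc0 | hc0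
        · have h1 := hQ 1 (-b)
          nlinarith
        · have h1 := hQ (-c) b
          nlinarith
      · have h1 := hQ b (-a)
        nlinarith
    have hr : 0 < r := by nlinarith [mul_self_nonneg q]
    rw [Matrix.det_fin_two, Matrix.det_fin_two]
    simp only [Matrix.add_apply]
    rw [hq', hb', ← hpp, ← hqq, ← hrr, ← haa, ← hbb, ← hcc]
    have hq2 : q * q ≤ p * r := by linarith
    have h1 : (q * q) * (b * b) ≤ (p * r) * (a * c) :=
      mul_le_mul hq2 hdT (mul_self_nonneg b) (mul_nonneg hp.le hr.le)
    have h2 : 0 ≤ p * c + r * a := add_nonneg (mul_nonneg hp.le hc) (mul_nonneg hr.le ha)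
    have h3 : 4 * ((q * b) * (q * b)) ≤ (p * c + r * a) * (p * c + r * a) := by
      nlinarith [sq_nonneg (p * c - r * a), h1]
    have key : 2 * (q * b) ≤ p * c + r * a := by nlinarith [h2, h3]
    nlinarith [key, hdT]
end

section
/- Fix complex numbers μ and ν and natural numbers m and k. Define g : ℂ → ℂ by g(t) = (the k-th derivative at 0 of the function t' ↦ exp(−t·t' + μ·t + ν·t')). Then the m-th derivative of g at 0 equals Σ_{l=0}^{min(m,k)} (−1)^l · (m!·k!)/((m−l)!·(k−l)!·l!) · μ^{m−l} · ν^{k−l}. -/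
open scoped Nat

open Complex Finset

private lemma iter_const_mul (n : ℕ) (c : ℂ) : ∀ (f : ℂ → ℂ) (x : ℂ),
    iteratedDeriv n (fun y => c * f y) x = c * iteratedDeriv n f x := by
  induction n with
  | zero => intro f x; simp
  | succ n ih =>
    intro f x
    rw [iteratedDeriv_succ', iteratedDeriv_succ']
    have h : deriv (fun y => c * f y) = fun y => c * deriv f y :=
      funext fun y => deriv_const_mul_field c
    rw [h, ih]

private lemma deriv_term (μ ν : ℂ) (n : ℕ) (t : ℂ) :
    HasDerivAt (fun s : ℂ => (ν - s) ^ n * Complex.exp (μ * s))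
      (-(n : ℂ) * (ν - t) ^ (n - 1) * Complex.exp (μ * t)
        + (ν - t) ^ n * (μ * Complex.exp (μ * t))) t := by
  have h1 : HasDerivAt (fun s : ℂ => ν - s) (-1) t := (hasDerivAt_id t).const_sub ν
  have h2 := h1.fun_pow n
  have h3 : HasDerivAt (fun s : ℂ => Complex.exp (μ * s)) (Complex.exp (μ * t) * μ) t := by
    simpa using ((hasDerivAt_id t).const_mul μ).cexp
  have := h2.fun_mul h3
  refine this.congr_deriv ?_
  ring

private lemma key (μ ν : ℂ) (k : ℕ) : ∀ (m : ℕ) (t : ℂ),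
    iteratedDeriv m (fun s : ℂ => (ν - s) ^ k * Complex.exp (μ * s)) t
      = ∑ l ∈ Finset.range (m + 1),
          ((m.choose l * k.descFactorial l : ℕ) : ℂ) * (-1) ^ l * μ ^ (m - l)
            * ((ν - t) ^ (k - l) * Complex.exp (μ * t)) := by
  intro m
  induction m with
  | zero => intro t; simp
  | succ m ih =>
    intro t
    rw [iteratedDeriv_succ]
    have hfun : iteratedDeriv m (fun s : ℂ => (ν - s) ^ k * Complex.exp (μ * s))
        = fun t => ∑ l ∈ Finset.range (m + 1),
            ((m.choose l * k.descFactorial l : ℕ) : ℂ) * (-1) ^ l * μ ^ (m - l)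
              * ((ν - t) ^ (k - l) * Complex.exp (μ * t)) := funext ih
    rw [hfun]
    have hd : HasDerivAt (fun t : ℂ => ∑ l ∈ Finset.range (m + 1),
            ((m.choose l * k.descFactorial l : ℕ) : ℂ) * (-1) ^ l * μ ^ (m - l)
              * ((ν - t) ^ (k - l) * Complex.exp (μ * t)))
        (∑ l ∈ Finset.range (m + 1),
            ((m.choose l * k.descFactorial l : ℕ) : ℂ) * (-1) ^ l * μ ^ (m - l)
              * (-((k - l : ℕ) : ℂ) * (ν - t) ^ (k - l - 1) * Complex.exp (μ * t)
                + (ν - t) ^ (k - l) * (μ * Complex.exp (μ * t)))) t := by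
      apply HasDerivAt.fun_sum
      intro l _
      exact (deriv_term μ ν (k - l) t).const_mul _
    rw [hd.deriv]
    -- abbreviations
    set e := Complex.exp (μ * t) with he
    set v := ν - t with hv
    -- X l and Y l
    have hsplit : ∀ l ∈ Finset.range (m + 1),
        ((m.choose l * k.descFactorial l : ℕ) : ℂ) * (-1) ^ l * μ ^ (m - l)
              * (-((k - l : ℕ) : ℂ) * v ^ (k - l - 1) * e + v ^ (k - l) * (μ * e))
        = ((m.choose l * k.descFactorial (l + 1) : ℕ) : ℂ) * (-1) ^ (l + 1) * μ ^ (m - l)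
              * (v ^ (k - (l + 1)) * e)
          + ((m.choose l * k.descFactorial l : ℕ) : ℂ) * (-1) ^ l * μ ^ (m + 1 - l)
              * (v ^ (k - l) * e) := by
      intro l hl
      have h1 : k.descFactorial (l + 1) = (k - l) * k.descFactorial l := Nat.descFactorial_succ k l
      have h2 : k - (l + 1) = k - l - 1 := by omega
      have h3 : m + 1 - l = (m - l) + 1 := by
        have : l ≤ m := by simpa using Nat.lt_succ_iff.mp (Finset.mem_range.mp hl)
        omega
      rw [h1, h2, h3]
      push_cast
      ring
    rw [Finset.sum_congr rfl hsplit, Finset.sum_add_distrib]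
    -- RHS: peel off l = 0
    conv_rhs => rw [Finset.sum_range_succ']
    have hg0 : (((m + 1).choose 0 * k.descFactorial 0 : ℕ) : ℂ) * (-1) ^ 0 * μ ^ (m + 1 - 0)
          * (v ^ (k - 0) * e)
        = ((m.choose 0 * k.descFactorial 0 : ℕ) : ℂ) * (-1) ^ 0 * μ ^ (m + 1 - 0)
          * (v ^ (k - 0) * e) := by norm_num
    rw [hg0]
    have hgsucc : ∀ l ∈ Finset.range (m + 1),
        (((m + 1).choose (l + 1) * k.descFactorial (l + 1) : ℕ) : ℂ) * (-1) ^ (l + 1)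
            * μ ^ (m + 1 - (l + 1)) * (v ^ (k - (l + 1)) * e)
        = ((m.choose l * k.descFactorial (l + 1) : ℕ) : ℂ) * (-1) ^ (l + 1) * μ ^ (m - l)
            * (v ^ (k - (l + 1)) * e)
          + ((m.choose (l + 1) * k.descFactorial (l + 1) : ℕ) : ℂ) * (-1) ^ (l + 1)
            * μ ^ (m + 1 - (l + 1)) * (v ^ (k - (l + 1)) * e) := by
      intro l _
      rw [Nat.choose_succ_succ]
      have : m + 1 - (l + 1) = m - l := by omega
      rw [this]
      push_cast
      ring
    rw [Finset.sum_congr rfl hgsucc, Finset.sum_add_distrib, add_assoc]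
    congr 1
    -- remains: ∑ Y l over range (m+1) = ∑_{l<m+1} Y (l+1) + Y 0
    rw [← Finset.sum_range_succ' (fun x => ((m.choose x * k.descFactorial x : ℕ) : ℂ)
      * (-1) ^ x * μ ^ (m + 1 - x) * (v ^ (k - x) * e)) (m + 1)]
    conv_rhs => rw [Finset.sum_range_succ]
    have : (((m.choose (m + 1)) * k.descFactorial (m + 1) : ℕ) : ℂ) * (-1) ^ (m + 1)
        * μ ^ (m + 1 - (m + 1)) * (v ^ (k - (m + 1)) * e) = 0 := by
      rw [Nat.choose_succ_self]
      simp
    rw [this, add_zero]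

private lemma g_eq (μ ν : ℂ) (k : ℕ) (t : ℂ) :
    iteratedDeriv k (fun t' : ℂ => Complex.exp (-t * t' + μ * t + ν * t')) 0
      = (ν - t) ^ k * Complex.exp (μ * t) := by
  have hfun : (fun t' : ℂ => Complex.exp (-t * t' + μ * t + ν * t'))
      = fun t' : ℂ => Complex.exp (μ * t) * Complex.exp ((ν - t) * t') := by
    funext t'
    rw [← Complex.exp_add]
    ring_nf
  rw [hfun, iter_const_mul, iteratedDeriv_cexp_const_mul]
  simp [mul_comm]

theorem iteratedDeriv_hermite_generating
    (μ ν : ℂ) (m k : ℕ)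
    (g : ℂ → ℂ)
    (hg : ∀ t : ℂ,
      g t = iteratedDeriv k (fun t' : ℂ => Complex.exp (-t * t' + μ * t + ν * t')) 0) :
    iteratedDeriv m g 0
      = ∑ l ∈ Finset.range (min m k + 1),
          (-1 : ℂ) ^ l * ((m ! * k ! : ℕ) : ℂ) / (((m - l)! * (k - l)! * l ! : ℕ) : ℂ)
            * μ ^ (m - l) * ν ^ (k - l) := by
  have hgfun : g = fun t : ℂ => (ν - t) ^ k * Complex.exp (μ * t) := by
    funext t; rw [hg t, g_eq]
  rw [hgfun, key μ ν k m 0]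
  rw [← Finset.sum_subset (Finset.range_subset_range.mpr (by omega :
      min m k + 1 ≤ m + 1))]
  · apply Finset.sum_congr rfl
    intro l hl
    have hlm : l ≤ m := by have := Finset.mem_range.mp hl; omega
    have hlk : l ≤ k := by have := Finset.mem_range.mp hl; omega
    have hnat : (m.choose l * k.descFactorial l) * ((m - l)! * (k - l)! * l !) = m ! * k ! := by
      have h1 : m.choose l * l ! * (m - l)! = m ! := Nat.choose_mul_factorial_mul_factorial hlm
      have h2 : (k - l)! * k.descFactorial l = k ! := Nat.factorial_mul_descFactorial hlk
      calc (m.choose l * k.descFactorial l) * ((m - l)! * (k - l)! * l !)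
          = (m.choose l * l ! * (m - l)!) * ((k - l)! * k.descFactorial l) := by ring
        _ = m ! * k ! := by rw [h1, h2]
    have hne : (((m - l)! * (k - l)! * l ! : ℕ) : ℂ) ≠ 0 := by
      exact_mod_cast (Nat.pos_of_ne_zero (by positivity)).ne'
    have hcoeff : ((m.choose l * k.descFactorial l : ℕ) : ℂ)
        = ((m ! * k ! : ℕ) : ℂ) / (((m - l)! * (k - l)! * l ! : ℕ) : ℂ) := by
      rw [eq_div_iff hne]
      exact_mod_cast congrArg (Nat.cast (R := ℂ)) hnat
    rw [hcoeff]
    simp only [sub_zero, mul_zero, Complex.exp_zero]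
    ring
  · intro l hl hnl
    have hlm : l ≤ m := by have := Finset.mem_range.mp hl; omega
    have hlk : k < l := by
      have h2 : ¬ l < min m k + 1 := fun h => hnl (Finset.mem_range.mpr h)
      omega
    have : k.descFactorial l = 0 := Nat.descFactorial_eq_zero_iff_lt.mpr hlk
    simp [this]
end
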